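/- The sequence R_{n+1}^{1/(n+1)} / R_n^{1/n} converges to 1 as n \to \infty. -/

import Mathlib

/-!
Let `D n = ∑ k, C(n, k) C(n + k, k)` be the central Delannoy numbers. Vandermonde's identity and
`C(a, i) C(b, j) ≤ C(a + b, i + j)` make `D` supermultiplicative, and `D n ≤ 8 ^ n`, so by
Fekete's lemma `log (D n) / n` converges to some `c`. The `k`-th term of `R n` is that of `D n`
divided by `2k - 1`, which is `-1` for `k = 0` and lies in `[1, 2n - 1]` otherwise; hence
`D n / (4n + 2) ≤ R n ≤ D n` for large `n`, so `log (R n) / n → c` as well. Thus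
`R n ^ (1 / n) → exp c`, and the ratio of consecutive roots tends to `1`.
-/

noncomputable def R (n : ℕ) : ℚ :=
  ∑ k ∈ Finset.range (n + 1),
    (Nat.choose n k : ℚ) * (Nat.choose (n + k) k : ℚ) * (1 / (2 * (k : ℚ) - 1))

open Finset Filter Real Topology Asymptotics

lemma tendsto_log_mul_add_div_atTop {a : ℝ} (ha : 0 < a) (b : ℝ) :
    Tendsto (fun x => log (a * x + b) / x) atTop (𝓝 0) := by
  have hlin : Tendsto (fun x => a * x + b) atTop atTop :=
    tendsto_atTop_add_const_right _ b (tendsto_id.const_mul_atTop ha)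
  have hO : (fun x => a * x + b) =O[atTop] id :=
    ((isBigO_refl _ _).const_mul_left a).add (isLittleO_const_id_atTop b).isBigO
  exact ((isLittleO_log_id_atTop.comp_tendsto hlin).trans_isBigO hO).tendsto_div_nhds_zero

lemma exists_tendsto_log_div_of_supermul {u : ℕ → ℝ} (hpos : ∀ n, 0 < u n)
    (hmul : ∀ m n, u m * u n ≤ u (m + n)) {C : ℝ} (hC : ∀ n, u n ≤ C ^ n) :
    ∃ c, Tendsto (fun n => log (u n) / n) atTop (𝓝 c) := by
  have hsub : Subadditive fun n => -log (u n) := fun m n => by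
    have := log_le_log (mul_pos (hpos m) (hpos n)) (hmul m n)
    rw [log_mul (hpos m).ne' (hpos n).ne'] at this
    linarith
  have hbdd : BddBelow (Set.range fun n => -log (u n) / n) := by
    have hC0 : 0 < C := by simpa using (hpos 1).trans_le (hC 1)
    refine ⟨-|log C|, ?_⟩
    rintro _ ⟨n, rfl⟩
    dsimp only
    rcases Nat.eq_zero_or_pos n with rfl | hn
    · simp
    have hlog : log (u n) ≤ n * log C := by
      simpa [log_pow] using log_le_log (hpos n) (hC n)
    rw [neg_div, neg_le_neg_iff, div_le_iff₀ (by positivity)]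
    nlinarith [le_abs_self (log C), (Nat.cast_pos.2 hn : (0 : ℝ) < n)]
  exact ⟨-hsub.lim, by simpa [neg_div] using (hsub.tendsto_lim hbdd).neg⟩

lemma tendsto_log_div_of_le_of_le_mul {u v w : ℕ → ℝ} {c : ℝ}
    (hu : Tendsto (fun n => log (u n) / n) atTop (𝓝 c))
    (hw : Tendsto (fun n => log (w n) / n) atTop (𝓝 0))
    (hv : ∀ᶠ n in atTop, 0 < v n ∧ v n ≤ u n ∧ u n ≤ w n * v n) :
    Tendsto (fun n => log (v n) / n) atTop (𝓝 c) := by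
  refine tendsto_of_tendsto_of_tendsto_of_le_of_le' (by simpa using hu.sub hw) hu ?_ ?_
  · filter_upwards [hv] with n ⟨hv0, hvu, huw⟩
    have hw0 : 0 < w n := pos_of_mul_pos_left ((hv0.trans_le hvu).trans_le huw) hv0.le
    rw [← sub_div]
    gcongr
    rw [sub_le_iff_le_add', ← log_mul hw0.ne' hv0.ne']
    exact log_le_log (hv0.trans_le hvu) huw
  · filter_upwards [hv] with n ⟨hv0, hvu, _⟩
    gcongr

lemma tendsto_rpow_succ_div_rpow_of_tendsto_log_div {v : ℕ → ℝ} {c : ℝ}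
    (hpos : ∀ᶠ n in atTop, 0 < v n) (hv : Tendsto (fun n => log (v n) / n) atTop (𝓝 c)) :
    Tendsto (fun n : ℕ => v (n + 1) ^ (1 / ((n : ℝ) + 1)) / v n ^ (1 / (n : ℝ)))
      atTop (𝓝 1) := by
  have hroot : Tendsto (fun n : ℕ => v n ^ (1 / (n : ℝ))) atTop (𝓝 (exp c)) := by
    refine ((continuous_exp.tendsto c).comp hv).congr' ?_
    filter_upwards [hpos] with n hn
    simp [rpow_def_of_pos hn, div_eq_mul_inv]
  have hroot' := hroot.comp (tendsto_add_atTop_nat 1)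
  simp only [Function.comp_def, Nat.cast_add, Nat.cast_one] at hroot'
  simpa [Pi.div_def, div_self (exp_ne_zero c)] using hroot'.div hroot (exp_ne_zero c)

lemma Nat.choose_mul_choose_le_add_choose (p q i j : ℕ) :
    p.choose i * q.choose j ≤ (p + q).choose (i + j) := by
  rw [Nat.add_choose_eq]
  exact single_le_sum (f := fun ij : ℕ × ℕ => p.choose ij.1 * q.choose ij.2)
    (fun _ _ => Nat.zero_le _) (a := (i, j)) (mem_antidiagonal.2 rfl)

def centralDelannoy (n : ℕ) : ℕ := ∑ k ∈ range (n + 1), n.choose k * (n + k).choose k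

namespace centralDelannoy

lemma two_pow_le (n : ℕ) : 2 ^ n ≤ centralDelannoy n := by
  rw [← Nat.sum_range_choose]
  exact sum_le_sum fun k _ => Nat.le_mul_of_pos_right _ (Nat.choose_pos (by omega))

lemma pos (n : ℕ) : 0 < centralDelannoy n := (Nat.two_pow_pos n).trans_le (two_pow_le n)

lemma le_eight_pow (n : ℕ) : centralDelannoy n ≤ 8 ^ n := by
  calc centralDelannoy n ≤ ∑ k ∈ range (n + 1), n.choose k * 4 ^ n := by
        refine sum_le_sum fun k hk => Nat.mul_le_mul_left _ ?_
        calc (n + k).choose k ≤ 2 ^ (n + k) := Nat.choose_le_two_pow _ _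
          _ ≤ 2 ^ (n + n) := Nat.pow_le_pow_right two_pos (by simp at hk; omega)
          _ = 4 ^ n := by rw [← two_mul, pow_mul]; norm_num
    _ = 8 ^ n := by rw [← sum_mul, Nat.sum_range_choose, ← mul_pow]; norm_num

lemma mul_le (m n : ℕ) : centralDelannoy m * centralDelannoy n ≤ centralDelannoy (m + n) := by
  set s := range (m + 1) ×ˢ range (n + 1)
  have hfiber : ∀ p ∈ s, p.1 + p.2 ∈ range (m + n + 1) := by
    intro p hp
    simp only [s, mem_product, mem_range] at hp ⊢
    omega
  calc centralDelannoy m * centralDelannoy n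
      = ∑ p ∈ s, m.choose p.1 * (m + p.1).choose p.1 * (n.choose p.2 * (n + p.2).choose p.2) := by
        rw [centralDelannoy, centralDelannoy, sum_mul_sum, sum_product]
    _ ≤ ∑ p ∈ s, m.choose p.1 * n.choose p.2 * (m + n + (p.1 + p.2)).choose (p.1 + p.2) := by
        refine sum_le_sum fun p _ => ?_
        have := Nat.choose_mul_choose_le_add_choose (m + p.1) (n + p.2) p.1 p.2
        rw [show m + p.1 + (n + p.2) = m + n + (p.1 + p.2) by ring] at this
        calc _ = m.choose p.1 * n.choose p.2 * ((m + p.1).choose p.1 * (n + p.2).choose p.2) := by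
              ring
          _ ≤ _ := Nat.mul_le_mul_left _ this
    _ = ∑ k ∈ range (m + n + 1), ∑ p ∈ s with p.1 + p.2 = k,
          m.choose p.1 * n.choose p.2 * (m + n + k).choose k := by
        rw [← sum_fiberwise_of_maps_to hfiber]
        refine sum_congr rfl fun k _ => sum_congr rfl fun p hp => ?_
        rw [(mem_filter.1 hp).2]
    _ ≤ ∑ k ∈ range (m + n + 1), ∑ p ∈ antidiagonal k,
          m.choose p.1 * n.choose p.2 * (m + n + k).choose k := by
        refine sum_le_sum fun k _ => sum_le_sum_of_subset fun p hp => ?_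
        exact mem_antidiagonal.2 (mem_filter.1 hp).2
    _ = centralDelannoy (m + n) := by
        simp only [← sum_mul, ← Nat.add_choose_eq]
        rfl

end centralDelannoy

lemma R_le_centralDelannoy (n : ℕ) : R n ≤ centralDelannoy n := by
  rw [R, centralDelannoy]
  push_cast
  refine sum_le_sum fun k _ => mul_le_of_le_one_right (by positivity) ?_
  rcases Nat.eq_zero_or_pos k with rfl | hk
  · norm_num
  · have : (1 : ℚ) ≤ k := by exact_mod_cast hk
    rw [div_le_one (by linarith)]
    linarith

lemma centralDelannoy_sub_one_le (n : ℕ) :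
    (centralDelannoy n : ℚ) - 1 ≤ (2 * n + 1) * (R n + 1) := by
  have hR : R n + 1 = ∑ k ∈ range n,
      (n.choose (k + 1) : ℚ) * (n + (k + 1)).choose (k + 1) * (1 / (2 * (k + 1 : ℚ) - 1)) := by
    rw [R, sum_range_succ']
    push_cast
    norm_num
  have hD : (centralDelannoy n : ℚ) - 1 =
      ∑ k ∈ range n, (n.choose (k + 1) : ℚ) * (n + (k + 1)).choose (k + 1) := by
    rw [centralDelannoy, sum_range_succ']
    push_cast
    norm_num
  rw [hR, hD, mul_sum]
  refine sum_le_sum fun k hk => ?_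
  have hkn : (k : ℚ) + 1 ≤ n := by exact_mod_cast mem_range.1 hk
  rw [mul_left_comm, ← mul_assoc, mul_assoc]
  refine le_mul_of_one_le_right (by positivity) ?_
  rw [mul_one_div, le_div_iff₀ (by linarith)]
  linarith

lemma four_mul_add_four_le_two_pow {n : ℕ} (hn : 5 ≤ n) : 4 * n + 4 ≤ 2 ^ n := by
  induction n, hn using Nat.le_induction with
  | base => norm_num
  | succ n _ ih => rw [pow_succ]; omega

lemma centralDelannoy_le_mul_R {n : ℕ} (hn : 5 ≤ n) :
    (centralDelannoy n : ℚ) ≤ (4 * n + 2) * R n := by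
  have hD : (4 * n + 4 : ℚ) ≤ centralDelannoy n := by
    exact_mod_cast (four_mul_add_four_le_two_pow hn).trans (centralDelannoy.two_pow_le n)
  nlinarith [centralDelannoy_sub_one_le n]

lemma R_pos {n : ℕ} (hn : 5 ≤ n) : 0 < R n := by
  have hD : (0 : ℚ) < centralDelannoy n := by exact_mod_cast centralDelannoy.pos n
  exact pos_of_mul_pos_right (hD.trans_le (centralDelannoy_le_mul_R hn)) (by positivity)

theorem stmt_14 :
    Filter.Tendsto
      (fun n : ℕ => (R (n + 1) : ℝ) ^ (1 / ((n : ℝ) + 1)) / (R n : ℝ) ^ (1 / (n : ℝ)))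
      Filter.atTop (nhds 1) := by
  obtain ⟨c, hc⟩ := exists_tendsto_log_div_of_supermul (u := fun n => (centralDelannoy n : ℝ))
    (fun n => by exact_mod_cast centralDelannoy.pos n)
    (fun m n => by exact_mod_cast centralDelannoy.mul_le m n)
    (C := 8) (fun n => by exact_mod_cast centralDelannoy.le_eight_pow n)
  have hbounds : ∀ᶠ n : ℕ in atTop, 0 < (R n : ℝ) ∧ (R n : ℝ) ≤ centralDelannoy n ∧
      (centralDelannoy n : ℝ) ≤ (4 * n + 2) * R n := by
    filter_upwards [eventually_ge_atTop 5] with n hn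
    exact ⟨by exact_mod_cast R_pos hn, by exact_mod_cast R_le_centralDelannoy n,
      by exact_mod_cast centralDelannoy_le_mul_R hn⟩
  have hlog : Tendsto (fun n : ℕ => log (4 * n + 2) / n) atTop (𝓝 0) :=
    (tendsto_log_mul_add_div_atTop four_pos 2).comp tendsto_natCast_atTop_atTop
  have hR : Tendsto (fun n : ℕ => log (R n : ℝ) / n) atTop (𝓝 c) :=
    tendsto_log_div_of_le_of_le_mul (u := fun n => (centralDelannoy n : ℝ))
      (w := fun n => 4 * n + 2) hc hlog hbounds
  exact tendsto_rpow_succ_div_rpow_of_tendsto_log_div (v := fun n => (R n : ℝ))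
    (hbounds.mono fun _ h => h.1) hR
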